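/- arXiv:2504.14158 — 5 statements merged into one kernel-verified Lean document; each statement's English description precedes it below -/
import Mathlib

section
/- Let Θ, Ψ be convex and closed sets of effects on a finite-dimensional Hilbert space with Θ nonempty. Then Θ ≼_dem Ψ (for all density operators ρ, inf_{M∈Θ} tr(Mρ) ≤ inf_{N∈Ψ} tr(Nρ)) if and only if Θ ≤_S Ψ (for every N ∈ Ψ there exists M ∈ Θ with M ⊑ N). -/
/-!
If every `N ∈ Ψ` dominates some `M ∈ Θ`, then `tr (M ρ) ≤ tr (N ρ)` for every state `ρ`, which
gives the demonic inequality. Conversely, if some `N ∈ Ψ` dominates no element of `Θ`, the compact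
convex set `N - Θ` misses the closed cone of positive semidefinite matrices, so Hahn–Banach yields a
real functional that is nonnegative on that cone and uniformly negative on `N - Θ`. A functional
that is nonnegative on the cone is `X ↦ re tr (X H)` on Hermitian `X` for some positive `H`;
normalising `H` gives a density operator on which `N` scores strictly below
`inf_{M ∈ Θ} tr (M ρ)`. This separation argument stands in for the minimax theorem.
-/

open Matrix
open scoped ComplexOrder

noncomputable section

/-- Löwner order: `A ⊑ B` iff `B - A` is positive semidefinite. -/
def Loewner {d : Type*} [Fintype d] (A B : Matrix d d ℂ) : Prop :=
  (B - A).PosSemidef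

/-- An effect: a positive semidefinite operator bounded above by the identity. -/
def IsEffect {d : Type*} [Fintype d] [DecidableEq d] (M : Matrix d d ℂ) : Prop :=
  M.PosSemidef ∧ (1 - M).PosSemidef

/-- A (partial) density operator: positive semidefinite with trace at most 1. -/
def IsDensity {d : Type*} [Fintype d] (ρ : Matrix d d ℂ) : Prop :=
  ρ.PosSemidef ∧ ρ.trace.re ≤ 1

/-- An orthogonal projector: Hermitian idempotent. -/
def IsProj {d : Type*} [Fintype d] (P : Matrix d d ℂ) : Prop :=
  P.IsHermitian ∧ P * P = P

-- Demonic expectation: `inf_{M ∈ Θ} tr(M ρ)`, with the convention that the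
-- infimum over the empty set is `tr ρ`.
open Classical in
def demExp {d : Type*} [Fintype d] (Θ : Set (Matrix d d ℂ)) (ρ : Matrix d d ℂ) : ℝ :=
  if Θ = ∅ then ρ.trace.re else sInf ((fun M => (M * ρ).trace.re) '' Θ)

/-- Angelic expectation: `sup_{M ∈ Θ} tr(M ρ)`; note `sSup ∅ = 0` in `ℝ`,
matching the convention that the supremum over the empty set is `0`. -/
def angExp {d : Type*} [Fintype d] (Θ : Set (Matrix d d ℂ)) (ρ : Matrix d d ℂ) : ℝ :=
  sSup ((fun M => (M * ρ).trace.re) '' Θ)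

/-- The extension `I_{Fin m} ⊗ Φ` of a super-operator `Φ`, acting blockwise. -/
def tensorMap {n : ℕ} (Φ : Matrix (Fin n) (Fin n) ℂ → Matrix (Fin n) (Fin n) ℂ) (m : ℕ)
    (A : Matrix (Fin m × Fin n) (Fin m × Fin n) ℂ) :
    Matrix (Fin m × Fin n) (Fin m × Fin n) ℂ :=
  fun p q => Φ (Matrix.of fun a b => A (p.1, a) (q.1, b)) p.2 q.2

/-- Complete positivity: every extension `I_K ⊗ Φ` maps positive semidefinite
matrices to positive semidefinite matrices. -/
def IsCP {n : ℕ} (Φ : Matrix (Fin n) (Fin n) ℂ → Matrix (Fin n) (Fin n) ℂ) : Prop :=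
  ∀ (m : ℕ) (A : Matrix (Fin m × Fin n) (Fin m × Fin n) ℂ),
    A.PosSemidef → (tensorMap Φ m A).PosSemidef

/-- Trace-nonincreasing on positive operators. -/
def IsTNI {n : ℕ} (Φ : Matrix (Fin n) (Fin n) ℂ → Matrix (Fin n) (Fin n) ℂ) : Prop :=
  ∀ A : Matrix (Fin n) (Fin n) ℂ, A.PosSemidef → (Φ A).trace.re ≤ A.trace.re

/-- Trace-preserving on positive operators. -/
def IsTP {n : ℕ} (Φ : Matrix (Fin n) (Fin n) ℂ → Matrix (Fin n) (Fin n) ℂ) : Prop :=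
  ∀ A : Matrix (Fin n) (Fin n) ℂ, A.PosSemidef → (Φ A).trace = A.trace

/-- CPTN super-operator: linear, completely positive, and trace-nonincreasing. -/
def IsCPTN {n : ℕ} (Φ : Matrix (Fin n) (Fin n) ℂ → Matrix (Fin n) (Fin n) ℂ) : Prop :=
  IsLinearMap ℂ Φ ∧ IsCP Φ ∧ IsTNI Φ

/-- The Choi matrix `J(Φ) = (Φ ⊗ I)(Ω)` of `Φ`, where `Ω` is the maximally
entangled state on `H ⊗ H`. -/
def choi {n : ℕ} (Φ : Matrix (Fin n) (Fin n) ℂ → Matrix (Fin n) (Fin n) ℂ) :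
    Matrix (Fin n × Fin n) (Fin n × Fin n) ℂ :=
  fun p q => (1 / (n : ℂ)) * Φ (Matrix.single p.2 q.2 1) p.1 q.1

theorem PointedCone.exists_nonneg_and_lt_neg_of_disjoint_isCompact {E : Type*}
    [TopologicalSpace E] [AddCommGroup E] [Module ℝ E] [IsTopologicalAddGroup E]
    [ContinuousSMul ℝ E] [LocallyConvexSpace ℝ E] (P : PointedCone ℝ E)
    (hP : IsClosed (P : Set E)) {K : Set E} (hKc : IsCompact K) (hKcv : Convex ℝ K)
    (hKP : Disjoint K P) :
    ∃ (f : E →L[ℝ] ℝ) (u : ℝ), u < 0 ∧ (∀ x ∈ P, 0 ≤ f x) ∧ ∀ x ∈ K, f x < u := by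
  obtain ⟨f, u, v, hfK, huv, hfP⟩ :=
    geometric_hahn_banach_compact_closed hKcv hKc P.convex hP hKP
  have hv : v < 0 := by simpa using hfP 0 P.zero_mem
  refine ⟨f, u, huv.trans hv, fun x hx => ?_, hfK⟩
  by_contra! hfx
  -- rescaling `x` inside the cone would bring `f` down to exactly `v`
  have := hfP ((v / f x) • x) (P.smul_mem (div_pos_of_neg_of_neg hv hfx).le hx)
  rw [map_smul, smul_eq_mul, div_mul_cancel₀ _ hfx.ne] at this
  exact this.false

namespace Matrix

variable {d : Type*} [Fintype d]

instance : LocallyConvexSpace ℝ (Matrix d d ℂ) :=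
  inferInstanceAs (LocallyConvexSpace ℝ (d → d → ℂ))

variable (d) in
def posSemidefCone : PointedCone ℝ (Matrix d d ℂ) where
  carrier := {A | A.PosSemidef}
  add_mem' := PosSemidef.add
  zero_mem' := PosSemidef.zero
  smul_mem' c _ hA := hA.smul c.2

open scoped MatrixOrder Matrix.Norms.L2Operator in
theorem isClosed_posSemidefCone : IsClosed (posSemidefCone d : Set (Matrix d d ℂ)) := by
  classical
  show IsClosed {A : Matrix d d ℂ | A.PosSemidef}
  simpa only [nonneg_iff_posSemidef] using CStarAlgebra.isClosed_nonneg (A := Matrix d d ℂ)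

theorem PosSemidef.re_trace_mul_nonneg {A B : Matrix d d ℂ} (hA : A.PosSemidef)
    (hB : B.PosSemidef) : 0 ≤ (A * B).trace.re := by
  classical
  obtain ⟨S, rfl⟩ : ∃ S : Matrix d d ℂ, A = star S * S := by
    open scoped MatrixOrder in exact CStarAlgebra.nonneg_iff_eq_star_mul_self.mp hA.nonneg
  rw [star_eq_conjTranspose, Matrix.mul_assoc, trace_mul_comm]
  exact (Complex.nonneg_iff.mp (hB.mul_mul_conjTranspose_same S).trace_nonneg).1

def traceReForm : LinearMap.BilinForm ℝ (Matrix d d ℂ) :=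
  (LinearMap.mul ℝ (Matrix d d ℂ)).compr₂ (Complex.reLm ∘ₗ traceLinearMap d ℝ ℂ)

theorem traceReForm_apply (X Y : Matrix d d ℂ) : traceReForm X Y = (X * Y).trace.re := rfl

theorem traceReForm_nondegenerate :
    (traceReForm : LinearMap.BilinForm ℝ (Matrix d d ℂ)).Nondegenerate := by
  refine .ofSeparatingLeft fun X hX => ?_
  have hre : (X * Xᴴ).trace.re = 0 := hX Xᴴ
  have him := (Complex.nonneg_iff.mp (posSemidef_self_mul_conjTranspose X).trace_nonneg).2
  exact trace_mul_conjTranspose_self_eq_zero_iff.mp (Complex.ext hre him.symm)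

theorem exists_re_trace_mul_eq (f : Module.Dual ℝ (Matrix d d ℂ)) :
    ∃ B : Matrix d d ℂ, ∀ X, (X * B).trace.re = f X :=
  ⟨(traceReForm.toDual traceReForm_nondegenerate).symm f, fun X => by
    rw [trace_mul_comm, ← traceReForm_apply, LinearMap.BilinForm.apply_toDual_symm_apply]⟩

theorem IsHermitian.re_trace_mul_conjTranspose {X : Matrix d d ℂ} (hX : X.IsHermitian)
    (B : Matrix d d ℂ) : (X * Bᴴ).trace.re = (X * B).trace.re := by
  rw [← hX.eq, ← conjTranspose_mul, trace_conjTranspose, hX.eq, trace_mul_comm]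
  exact Complex.conj_re _

theorem exists_posSemidef_re_trace_mul_eq (f : Module.Dual ℝ (Matrix d d ℂ))
    (hf : ∀ A : Matrix d d ℂ, A.PosSemidef → 0 ≤ f A) :
    ∃ H : Matrix d d ℂ, H.PosSemidef ∧ ∀ X, X.IsHermitian → (X * H).trace.re = f X := by
  obtain ⟨B, hB⟩ := exists_re_trace_mul_eq f
  set H : Matrix d d ℂ := (2⁻¹ : ℝ) • (B + Bᴴ)
  have hHerm : H.IsHermitian := by
    simp only [H, IsHermitian, conjTranspose_smul, conjTranspose_add, conjTranspose_conjTranspose,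
      star_trivial, add_comm]
  have hH : ∀ X, X.IsHermitian → (X * H).trace.re = f X := by
    intro X hX
    simp only [H, Matrix.mul_smul, Matrix.mul_add, trace_smul, trace_add, Complex.smul_re,
      Complex.add_re, hX.re_trace_mul_conjTranspose, hB, smul_eq_mul]
    ring
  refine ⟨H, .of_dotProduct_mulVec_nonneg hHerm fun x => ?_, hH⟩
  have hP := posSemidef_vecMulVec_self_star x
  have hxHx : star x ⬝ᵥ (H *ᵥ x) = (vecMulVec x (star x) * H).trace := by
    rw [trace_mul_comm, mul_vecMulVec, trace_vecMulVec, dotProduct_comm]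
  refine Complex.nonneg_iff.mpr ⟨?_, (hHerm.im_star_dotProduct_mulVec_self x).symm⟩
  rw [hxHx, hH _ hP.isHermitian]
  exact hf _ hP

theorem PosSemidef.exists_pos_isDensity_smul {H : Matrix d d ℂ} (hH : H.PosSemidef) :
    ∃ c : ℝ, 0 < c ∧ IsDensity (c • H) := by
  have htr : 0 ≤ H.trace.re := (Complex.nonneg_iff.mp hH.trace_nonneg).1
  refine ⟨(H.trace.re + 1)⁻¹, by positivity, hH.smul (by positivity), ?_⟩
  rw [trace_smul, Complex.smul_re, smul_eq_mul, inv_mul_le_one₀ (by positivity)]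
  linarith

end Matrix

section
variable {d : Type*} [Fintype d]

open scoped MatrixOrder in
theorem isEffect_iff_mem_Icc [DecidableEq d] {M : Matrix d d ℂ} :
    IsEffect M ↔ M ∈ Set.Icc 0 1 := by
  rw [Set.mem_Icc, nonneg_iff_posSemidef, le_iff, IsEffect]

open scoped MatrixOrder Matrix.Norms.L2Operator in
theorem IsClosed.isCompact_of_isEffect [DecidableEq d] {Θ : Set (Matrix d d ℂ)}
    (hΘ : IsClosed Θ) (hΘe : ∀ M ∈ Θ, IsEffect M) : IsCompact Θ := by
  refine (isCompact_closedBall (0 : Matrix d d ℂ) 1).of_isClosed_subset hΘ fun M hM => ?_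
  have hM01 := isEffect_iff_mem_Icc.mp (hΘe M hM)
  rw [mem_closedBall_zero_iff]
  exact (CStarAlgebra.mem_Icc_iff_norm_le_one.mp hM01).2

theorem Loewner.re_trace_mul_le {M N ρ : Matrix d d ℂ} (hMN : Loewner M N)
    (hρ : ρ.PosSemidef) : (M * ρ).trace.re ≤ (N * ρ).trace.re := by
  have := PosSemidef.re_trace_mul_nonneg hMN hρ
  rwa [Matrix.sub_mul, trace_sub, Complex.sub_re, sub_nonneg] at this

theorem IsEffect.re_trace_mul_le [DecidableEq d] {M ρ : Matrix d d ℂ} (hM : IsEffect M)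
    (hρ : ρ.PosSemidef) : (M * ρ).trace.re ≤ ρ.trace.re := by
  simpa using Loewner.re_trace_mul_le hM.2 hρ

theorem demExp_empty (ρ : Matrix d d ℂ) : demExp ∅ ρ = ρ.trace.re := if_pos rfl

theorem demExp_le {Θ : Set (Matrix d d ℂ)} {ρ M : Matrix d d ℂ}
    (hΘ : ∀ M ∈ Θ, M.PosSemidef) (hρ : ρ.PosSemidef) (hM : M ∈ Θ) :
    demExp Θ ρ ≤ (M * ρ).trace.re := by
  rw [demExp, if_neg (Set.nonempty_iff_ne_empty.mp ⟨M, hM⟩)]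
  refine csInf_le ⟨0, ?_⟩ (Set.mem_image_of_mem _ hM)
  rintro _ ⟨M', hM', rfl⟩
  exact (hΘ M' hM').re_trace_mul_nonneg hρ

theorem le_demExp {Θ : Set (Matrix d d ℂ)} {ρ : Matrix d d ℂ} {a : ℝ} (hΘ : Θ.Nonempty)
    (h : ∀ M ∈ Θ, a ≤ (M * ρ).trace.re) : a ≤ demExp Θ ρ := by
  rw [demExp, if_neg hΘ.ne_empty]
  exact le_csInf (hΘ.image _) (Set.forall_mem_image.mpr h)

theorem exists_isDensity_uniform_gap_of_forall_not_loewner {Θ : Set (Matrix d d ℂ)}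
    (hΘc : IsCompact Θ) (hΘcv : Convex ℝ Θ) (hΘh : ∀ M ∈ Θ, M.IsHermitian)
    {N : Matrix d d ℂ} (hN : N.IsHermitian) (hNΘ : ∀ M ∈ Θ, ¬ Loewner M N) :
    ∃ ρ, IsDensity ρ ∧ ∃ ε > 0, ∀ M ∈ Θ, (N * ρ).trace.re + ε ≤ (M * ρ).trace.re := by
  set K := (fun M => N - M) '' Θ
  have hKcv : Convex ℝ K := by
    simpa [K, Set.singleton_sub] using (convex_singleton N).sub hΘcv
  have hKP : Disjoint K (posSemidefCone d) := by
    rw [Set.disjoint_left]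
    rintro _ ⟨M, hM, rfl⟩
    exact hNΘ M hM
  obtain ⟨f, u, hu, hfP, hfK⟩ :=
    (posSemidefCone d).exists_nonneg_and_lt_neg_of_disjoint_isCompact isClosed_posSemidefCone
      (hΘc.image (by fun_prop)) hKcv hKP
  obtain ⟨H, hH, hHf⟩ := exists_posSemidef_re_trace_mul_eq f fun A hA => hfP A hA
  obtain ⟨c, hc, hρ⟩ := hH.exists_pos_isDensity_smul
  refine ⟨c • H, hρ, -(c * u), by nlinarith, fun M hM => ?_⟩
  have hgap : ((N - M) * H).trace.re < u := by
    rw [hHf _ (hN.sub (hΘh M hM))]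
    exact hfK _ ⟨M, hM, rfl⟩
  rw [Matrix.sub_mul, trace_sub, Complex.sub_re] at hgap
  simp only [Matrix.mul_smul, trace_smul, Complex.smul_re, smul_eq_mul]
  nlinarith

end

theorem dem_iff_smyth_general {n : ℕ} (Θ Ψ : Set (Matrix (Fin n) (Fin n) ℂ))
    (hΘe : ∀ M ∈ Θ, IsEffect M) (hΨe : ∀ N ∈ Ψ, IsEffect N)
    (hΘcv : Convex ℝ Θ)
    (hΘcl : IsClosed Θ)
    (hne : Θ.Nonempty) :
    (∀ ρ : Matrix (Fin n) (Fin n) ℂ, IsDensity ρ → demExp Θ ρ ≤ demExp Ψ ρ) ↔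
      (∀ N ∈ Ψ, ∃ M ∈ Θ, Loewner M N) := by
  have hΘρ : ∀ ρ, ρ.PosSemidef → ∀ M ∈ Θ, demExp Θ ρ ≤ (M * ρ).trace.re :=
    fun _ hρ _ hM => demExp_le (fun M hM => (hΘe M hM).1) hρ hM
  constructor
  · intro hdem N hN
    by_contra! hNΘ
    obtain ⟨ρ, hρ, ε, hε, hgap⟩ := exists_isDensity_uniform_gap_of_forall_not_loewner
      (hΘcl.isCompact_of_isEffect hΘe) hΘcv (fun M hM => (hΘe M hM).1.isHermitian)
      (hΨe N hN).1.isHermitian hNΘ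
    have hΘgap : (N * ρ).trace.re + ε ≤ demExp Θ ρ := le_demExp hne hgap
    have hΨN : demExp Ψ ρ ≤ (N * ρ).trace.re := demExp_le (fun M hM => (hΨe M hM).1) hρ.1 hN
    linarith [hdem ρ hρ]
  · intro hsmyth ρ hρ
    rcases Ψ.eq_empty_or_nonempty with rfl | hΨ
    · obtain ⟨M, hM⟩ := hne
      rw [demExp_empty]
      exact (hΘρ ρ hρ.1 M hM).trans ((hΘe M hM).re_trace_mul_le hρ.1)
    · refine le_demExp hΨ fun N hN => ?_
      obtain ⟨M, hM, hMN⟩ := hsmyth N hN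
      exact (hΘρ ρ hρ.1 M hM).trans (hMN.re_trace_mul_le hρ.1)

theorem dem_iff_smyth {n : ℕ} (Θ Ψ : Set (Matrix (Fin n) (Fin n) ℂ))
    (hΘe : ∀ M ∈ Θ, IsEffect M) (hΨe : ∀ N ∈ Ψ, IsEffect N)
    (hΘcv : Convex ℝ Θ) (hΨcv : Convex ℝ Ψ)
    (hΘcl : IsClosed Θ) (hΨcl : IsClosed Ψ)
    (hne : Θ.Nonempty) :
    (∀ ρ : Matrix (Fin n) (Fin n) ℂ, IsDensity ρ → demExp Θ ρ ≤ demExp Ψ ρ) ↔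
      (∀ N ∈ Ψ, ∃ M ∈ Θ, Loewner M N) :=
  dem_iff_smyth_general Θ Ψ hΘe hΨe hΘcv hΘcl hne
end
end

section
/- Let E, F be completely positive trace-nonincreasing super-operators on L(H), H finite-dimensional. Then the following are equivalent: (i) F − E is completely positive; (ii) for every finite-dimensional Hilbert space K and every positive operator A on K ⊗ H with A ⊑ I, (I_K ⊗ E)(A) ⊑ (I_K ⊗ F)(A); (iii) E†(N) ⊑ F†(N) for every effect N on K ⊗ H and every finite-dimensional K. -/
open Matrix
open scoped ComplexOrder

noncomputable section

/-!
Complete positivity of `F - E` says that every extension `I_K ⊗ (F - E)` is a positive map.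
A linear map is positive as soon as it is positive on effects, since every positive matrix `A`
is a positive multiple of an effect (`A ⊑ ‖A‖ • 1`); this gives (i) ⇔ (ii). A matrix is positive
iff its trace pairing with every positive matrix is nonnegative, so a map is positive iff its
trace adjoint is, and `I_K ⊗ Φ†` is the trace adjoint of `I_K ⊗ Φ`; applied to `F† - E†`,
together with the remark on effects, this gives (i) ⇔ (iii).
-/

lemma IsLinearMap.sub {M N : Type*} [AddCommGroup M] [Module ℂ M] [AddCommGroup N] [Module ℂ N]
    {f g : M → N} (hf : IsLinearMap ℂ f) (hg : IsLinearMap ℂ g) : IsLinearMap ℂ (f - g) :=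
  (hf.mk' f - hg.mk' g).isLinear

section PositiveMaps

variable {d : Type*} [Fintype d]

def IsPositiveMap (G : Matrix d d ℂ → Matrix d d ℂ) : Prop :=
  ∀ A, A.PosSemidef → (G A).PosSemidef

lemma Matrix.posSemidef_of_forall_dotProduct_mulVec_nonneg {M : Matrix d d ℂ}
    (h : ∀ x, 0 ≤ star x ⬝ᵥ (M *ᵥ x)) : M.PosSemidef := by
  classical
  rw [← Matrix.isPositive_toEuclideanLin_iff, LinearMap.isPositive_iff_complex]
  intro x
  have hx := h x.ofLp
  have hz : inner ℂ (toEuclideanLin M x) x = star x.ofLp ⬝ᵥ M *ᵥ x.ofLp := by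
    rw [EuclideanSpace.inner_eq_star_dotProduct, dotProduct_star, dotProduct_comm]
    exact (IsSelfAdjoint.of_nonneg hx).star_eq
  rw [hz]
  exact ⟨RCLike.conj_eq_iff_re.mp (IsSelfAdjoint.of_nonneg hx).star_eq,
    (RCLike.nonneg_iff.mp hx).1⟩

open scoped MatrixOrder in
lemma Matrix.PosSemidef.trace_mul_nonneg {P Q : Matrix d d ℂ} (hP : P.PosSemidef)
    (hQ : Q.PosSemidef) : 0 ≤ (P * Q).trace := by
  classical
  obtain ⟨hS, hSS⟩ : IsSelfAdjoint (CFC.sqrt Q) ∧ CFC.sqrt Q * CFC.sqrt Q = Q :=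
    ⟨.of_nonneg (CFC.sqrt_nonneg Q), CFC.sqrt_mul_sqrt_self Q (nonneg_iff_posSemidef.mpr hQ)⟩
  have hPQ : (P * Q).trace = ((CFC.sqrt Q)ᴴ * P * CFC.sqrt Q).trace := by
    rw [← star_eq_conjTranspose, hS.star_eq, Matrix.mul_assoc, Matrix.trace_mul_comm (CFC.sqrt Q),
      Matrix.mul_assoc, hSS]
  exact hPQ ▸ (hP.conjTranspose_mul_mul_same (CFC.sqrt Q)).trace_nonneg

lemma Matrix.trace_mul_vecMulVec_star (M : Matrix d d ℂ) (x : d → ℂ) :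
    (M * vecMulVec x (star x)).trace = star x ⬝ᵥ (M *ᵥ x) := by
  rw [trace_mul_comm, vecMulVec_mul, trace_vecMulVec, dotProduct_comm, ← dotProduct_mulVec]

lemma Matrix.posSemidef_iff_forall_trace_mul_nonneg {M : Matrix d d ℂ} :
    M.PosSemidef ↔ ∀ P : Matrix d d ℂ, P.PosSemidef → 0 ≤ (M * P).trace :=
  ⟨fun hM _ hP => hM.trace_mul_nonneg hP, fun h =>
    posSemidef_of_forall_dotProduct_mulVec_nonneg fun x =>
      trace_mul_vecMulVec_star M x ▸ h _ (posSemidef_vecMulVec_self_star x)⟩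

lemma IsPositiveMap.of_trace_mul_eq {G G' : Matrix d d ℂ → Matrix d d ℂ}
    (hadj : ∀ A B, (G A * B).trace = (A * G' B).trace) (hG' : IsPositiveMap G') :
    IsPositiveMap G := fun A hA =>
  posSemidef_iff_forall_trace_mul_nonneg.mpr fun P hP => hadj A P ▸ hA.trace_mul_nonneg (hG' P hP)

lemma isPositiveMap_iff_of_trace_mul_eq {G G' : Matrix d d ℂ → Matrix d d ℂ}
    (hadj : ∀ A B, (G A * B).trace = (A * G' B).trace) :
    IsPositiveMap G ↔ IsPositiveMap G' :=
  ⟨.of_trace_mul_eq fun B A => by rw [trace_mul_comm, ← hadj, trace_mul_comm],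
    .of_trace_mul_eq hadj⟩

variable [DecidableEq d]

open scoped Matrix.Norms.L2Operator MatrixOrder in
lemma Matrix.PosSemidef.exists_pos_smul_isEffect {A : Matrix d d ℂ} (hA : A.PosSemidef) :
    ∃ c : ℝ, 0 < c ∧ IsEffect ((c : ℂ) • A) := by
  have hnorm : (((‖A‖ : ℝ) : ℂ) • 1 - A).PosSemidef := by
    have := IsSelfAdjoint.le_algebraMap_norm_self (A := Matrix d d ℂ) (a := A) hA.1
    rw [Matrix.le_iff, Algebra.algebraMap_eq_smul_one] at this
    simpa using this
  have hc : (0 : ℝ) < (‖A‖ + 1)⁻¹ := by positivity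
  refine ⟨(‖A‖ + 1)⁻¹, hc, hA.smul (Complex.zero_le_real.mpr hc.le), ?_⟩
  have h1 : (1 : Matrix d d ℂ) - (((‖A‖ + 1)⁻¹ : ℝ) : ℂ) • A
      = (((‖A‖ + 1)⁻¹ : ℝ) : ℂ) • ((((‖A‖ : ℝ) : ℂ) • 1 - A) + 1) := by
    match_scalars
    · field_simp
    · ring
  rw [h1]
  exact (hnorm.add PosSemidef.one).smul (Complex.zero_le_real.mpr hc.le)

lemma isPositiveMap_iff_forall_isEffect {G : Matrix d d ℂ → Matrix d d ℂ}
    (hG : IsLinearMap ℂ G) :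
    IsPositiveMap G ↔ ∀ N, IsEffect N → (G N).PosSemidef := by
  refine ⟨fun h N hN => h N hN.1, fun h A hA => ?_⟩
  obtain ⟨c, hc, hcA⟩ := hA.exists_pos_smul_isEffect
  have := (h _ hcA).smul (a := ((c⁻¹ : ℝ) : ℂ)) (Complex.zero_le_real.mpr (inv_nonneg.mpr hc.le))
  rwa [hG.map_smul, smul_smul, ← Complex.ofReal_mul, inv_mul_cancel₀ hc.ne', Complex.ofReal_one,
    one_smul] at this

end PositiveMaps

section TensorMap

variable {n : ℕ}

lemma IsLinearMap.tensorMap {Φ : Matrix (Fin n) (Fin n) ℂ → Matrix (Fin n) (Fin n) ℂ}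
    (hΦ : IsLinearMap ℂ Φ) (m : ℕ) : IsLinearMap ℂ (tensorMap Φ m) where
  map_add A B := by
    funext p q
    exact congrFun₂ (hΦ.map_add _ _) p.2 q.2
  map_smul c A := by
    funext p q
    exact congrFun₂ (hΦ.map_smul c _) p.2 q.2

lemma Matrix.trace_mul_eq_sum_trace_blocks {ι κ : Type*} [Fintype ι] [Fintype κ]
    (X Y : Matrix (ι × κ) (ι × κ) ℂ) :
    (X * Y).trace = ∑ a, ∑ b,
      (of (fun i j => X (a, i) (b, j)) * of (fun i j => Y (b, i) (a, j))).trace := by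
  simp only [trace, diag_apply, mul_apply, Fintype.sum_prod_type, of_apply]
  refine Finset.sum_congr rfl fun a _ => ?_
  exact Finset.sum_comm

lemma trace_tensorMap_mul {Φ Φ' : Matrix (Fin n) (Fin n) ℂ → Matrix (Fin n) (Fin n) ℂ}
    (h : ∀ A B, (Φ A * B).trace = (A * Φ' B).trace) (m : ℕ)
    (A B : Matrix (Fin m × Fin n) (Fin m × Fin n) ℂ) :
    (tensorMap Φ m A * B).trace = (A * tensorMap Φ' m B).trace := by
  rw [trace_mul_eq_sum_trace_blocks, trace_mul_eq_sum_trace_blocks]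
  refine Finset.sum_congr rfl fun a _ => Finset.sum_congr rfl fun b _ => ?_
  exact h (of fun i j => A (a, i) (b, j)) (of fun i j => B (b, i) (a, j))

lemma isCP_iff_forall_isEffect {Φ : Matrix (Fin n) (Fin n) ℂ → Matrix (Fin n) (Fin n) ℂ}
    (hΦ : IsLinearMap ℂ Φ) :
    IsCP Φ ↔ ∀ m A, IsEffect A → (tensorMap Φ m A).PosSemidef :=
  forall_congr' fun m => isPositiveMap_iff_forall_isEffect (hΦ.tensorMap m)

lemma isCP_iff_of_trace_mul_eq {Φ Φ' : Matrix (Fin n) (Fin n) ℂ → Matrix (Fin n) (Fin n) ℂ}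
    (h : ∀ A B, (Φ A * B).trace = (A * Φ' B).trace) : IsCP Φ ↔ IsCP Φ' :=
  forall_congr' fun m => isPositiveMap_iff_of_trace_mul_eq (trace_tensorMap_mul h m)

end TensorMap

theorem cp_order_characterizations {n : ℕ}
    (E F E' F' : Matrix (Fin n) (Fin n) ℂ → Matrix (Fin n) (Fin n) ℂ)
    (hE : IsCPTN E) (hF : IsCPTN F)
    (hE'l : IsLinearMap ℂ E') (hF'l : IsLinearMap ℂ F')
    (hadjE : ∀ A B : Matrix (Fin n) (Fin n) ℂ, (E A * B).trace = (A * E' B).trace)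
    (hadjF : ∀ A B : Matrix (Fin n) (Fin n) ℂ, (F A * B).trace = (A * F' B).trace) :
    (IsCP (F - E) ↔
      ∀ (m : ℕ) (A : Matrix (Fin m × Fin n) (Fin m × Fin n) ℂ),
        A.PosSemidef → Loewner A 1 →
          Loewner (tensorMap E m A) (tensorMap F m A)) ∧
    (IsCP (F - E) ↔
      ∀ (m : ℕ) (N : Matrix (Fin m × Fin n) (Fin m × Fin n) ℂ),
        IsEffect N → Loewner (tensorMap E' m N) (tensorMap F' m N)) := by
  have hadj : ∀ A B : Matrix (Fin n) (Fin n) ℂ,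
      ((F - E) A * B).trace = (A * (F' - E') B).trace := fun A B => by
    simp only [Pi.sub_apply, Matrix.sub_mul, Matrix.mul_sub, trace_sub, hadjE, hadjF]
  -- `Loewner (tensorMap Ψ m A) (tensorMap Φ m A)` unfolds to `(tensorMap (Φ - Ψ) m A).PosSemidef`.
  constructor
  · rw [isCP_iff_forall_isEffect (hF.1.sub hE.1)]
    exact forall₂_congr fun m A => ⟨fun h hA h1 => h ⟨hA, h1⟩, fun h hA => h hA.1 hA.2⟩
  · rw [isCP_iff_of_trace_mul_eq hadj, isCP_iff_forall_isEffect (hF'l.sub hE'l)]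
    rfl
end
end

section
/- Let E be a CPTN super-operator on L(H) and Q an orthogonal projector on H. The largest projector P (under Löwner order) satisfying P ⊑ E†(Q) is the eigenspace E(E†(Q)) of E†(Q) for eigenvalue 1; the largest projector P satisfying P ⊑ I − E†(I − Q) is the kernel of E†(Q⊥); and the smallest projector R such that supp(E(ρ)) ⊆ R for all partial density operators ρ with supp(ρ) ⊆ Q is supp(E(Q)). -/
open Matrix
open scoped ComplexOrder

noncomputable section

/-!
By trace duality, `⟨w, E(X) w⟩ = tr (X E†(w w†))`, so `E†` is positive, and since `E` is
trace-nonincreasing it sends projectors to effects `0 ⊑ E†(Q) ⊑ I`. If `P ⊑ A ⊑ I` with `P`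
a projector and `P v = v`, then `⟨v, (I - A) v⟩ ≤ ⟨v, (I - P) v⟩ = 0`, so `A v = v`: the
projectors below an effect are exactly those onto subspaces of its eigenvalue-`1`
eigenspace. This gives the first claim, and the second is the first one for
`I - E†(I - Q)`, whose eigenvalue-`1` eigenspace is `ker E†(Q⊥)`.

For the third, a positive `N = E†(w w†)` with `tr (Q N) = ⟨w, E(Q) w⟩ = 0` has `Q N Q = 0`,
so `⟨w, E(ρ) w⟩ = tr (ρ N) = 0` whenever `Q ρ = ρ`; thus `ker E(Q) ⊆ ker E(ρ)`. Conversely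
`Q` itself, rescaled to a partial density operator, is one of the admissible `ρ`.
-/

namespace Matrix

variable {m : Type*} [Fintype m]

theorem posSemidef_of_forall_dotProduct_mulVec_nonneg_s11 {M : Matrix m m ℂ}
    (h : ∀ v, 0 ≤ star v ⬝ᵥ M *ᵥ v) : M.PosSemidef := by
  classical
  rw [← isPositive_toEuclideanLin_iff, LinearMap.isPositive_iff_complex]
  intro x
  obtain ⟨r, hr, hz⟩ := RCLike.nonneg_iff_exists_ofReal.mp (h x.ofLp)
  simp [EuclideanSpace.inner_eq_star_dotProduct, dotProduct_star,
    dotProduct_comm _ (star x.ofLp), ← hz, hr]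

theorem trace_mul_vecMulVec_star_s11 (M : Matrix m m ℂ) (v : m → ℂ) :
    (M * vecMulVec v (star v)).trace = star v ⬝ᵥ M *ᵥ v := by
  rw [mul_vecMulVec, dotProduct_comm]
  rfl

theorem PosSemidef.trace_mul_nonneg_s11 {A B : Matrix m m ℂ} (hA : A.PosSemidef)
    (hB : B.PosSemidef) : 0 ≤ (A * B).trace := by
  classical
  open scoped MatrixOrder in
  obtain ⟨X, rfl⟩ := CStarAlgebra.nonneg_iff_eq_star_mul_self.mp hA.nonneg
  rw [star_eq_conjTranspose, mul_assoc, trace_mul_comm]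
  exact (hB.mul_mul_conjTranspose_same X).trace_nonneg

theorem PosSemidef.exists_isDensity_smul {A : Matrix m m ℂ} (hA : A.PosSemidef) :
    ∃ c : ℂ, c ≠ 0 ∧ IsDensity (c • A) := by
  have ht : 0 ≤ A.trace.re := (Complex.nonneg_iff.mp hA.trace_nonneg).1
  refine ⟨((A.trace.re + 1)⁻¹ : ℝ), by norm_cast; positivity,
    hA.smul (by norm_cast; positivity), ?_⟩
  rw [trace_smul, smul_eq_mul, Complex.re_ofReal_mul, inv_mul_le_iff₀ (by positivity)]
  linarith

theorem mulVec_eq_self_of_loewner [DecidableEq m] {A P : Matrix m m ℂ}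
    (h1A : (1 - A).PosSemidef) (hPA : Loewner P A) {v : m → ℂ} (hv : P *ᵥ v = v) :
    A *ᵥ v = v := by
  have hq : star v ⬝ᵥ (1 - A) *ᵥ v = -(star v ⬝ᵥ (A - P) *ᵥ v) := by
    simp only [sub_mulVec, one_mulVec, dotProduct_sub, hv]
    ring
  have hq0 : star v ⬝ᵥ (1 - A) *ᵥ v = 0 :=
    le_antisymm (hq ▸ neg_nonpos.mpr (hPA.dotProduct_mulVec_nonneg v))
      (h1A.dotProduct_mulVec_nonneg v)
  rw [h1A.dotProduct_mulVec_zero_iff, sub_mulVec, one_mulVec, sub_eq_zero] at hq0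
  exact hq0.symm

end Matrix

namespace IsProj

variable {m : Type*} [Fintype m] {P : Matrix m m ℂ}

theorem posSemidef (hP : IsProj P) : P.PosSemidef := by
  simpa [hP.1.eq, hP.2] using posSemidef_conjTranspose_mul_self P

theorem one_sub [DecidableEq m] (hP : IsProj P) : IsProj (1 - P) :=
  ⟨isHermitian_one.sub hP.1, by simp [sub_mul, mul_sub, hP.2]⟩

theorem mul_eq_right_iff_forall_fixed {M : Matrix m m ℂ} (hP : IsProj P) :
    M * P = P ↔ ∀ v, P *ᵥ v = v → M *ᵥ v = v := by
  refine ⟨fun h v hv => by rw [← hv, mulVec_mulVec, h], fun h => ?_⟩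
  refine ext_iff_mulVec.mpr fun v => ?_
  rw [← mulVec_mulVec, h _ (by rw [mulVec_mulVec, hP.2])]

theorem mul_eq_right_iff_ker_le [DecidableEq m] {M : Matrix m m ℂ} (hP : IsProj P)
    (hM : M.IsHermitian) : P * M = M ↔ ∀ v, P *ᵥ v = 0 → M *ᵥ v = 0 := by
  have hcompl : P * M = M ↔ M * (1 - P) = 0 := by
    rw [← conjTranspose_inj, conjTranspose_mul, hP.1.eq, hM.eq, mul_sub, mul_one, sub_eq_zero,
      eq_comm]
  rw [hcompl, ext_iff_mulVec]
  refine ⟨fun h v hv => ?_, fun h v => ?_⟩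
  · simpa [← mulVec_mulVec, sub_mulVec, hv] using h v
  · rw [← mulVec_mulVec, zero_mulVec]
    exact h _ (by rw [mulVec_mulVec, mul_sub, hP.2, mul_one, sub_self, zero_mulVec])

theorem loewner_of_mul_eq [DecidableEq m] (hP : IsProj P) {A : Matrix m m ℂ}
    (hA : A.PosSemidef) (h : A * P = P) : Loewner P A := by
  have hPA : P * A = P := by simpa [hP.1.eq, hA.1.eq] using congrArg conjTranspose h
  have : A - P = (1 - P)ᴴ * A * (1 - P) := by
    simp [hP.1.eq, sub_mul, mul_sub, hPA, h, hP.2]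
  unfold Loewner
  rw [this]
  exact hA.conjTranspose_mul_mul_same _

theorem greatest_below_effect [DecidableEq m] {A R : Matrix m m ℂ} (hA : A.PosSemidef)
    (h1A : (1 - A).PosSemidef) (hR : IsProj R) (hRA : ∀ v, R *ᵥ v = v ↔ A *ᵥ v = v) :
    Loewner R A ∧ ∀ P, IsProj P → Loewner P A → Loewner P R :=
  ⟨hR.loewner_of_mul_eq hA <| hR.mul_eq_right_iff_forall_fixed.mpr fun v hv => (hRA v).mp hv,
    fun _ hP hPA => hP.loewner_of_mul_eq hR.posSemidef <| hP.mul_eq_right_iff_forall_fixed.mpr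
      fun _ hv => (hRA _).mpr (mulVec_eq_self_of_loewner h1A hPA hv)⟩

theorem trace_mul_eq_zero_of_support {Q N ρ : Matrix m m ℂ} (hQ : IsProj Q) (hN : N.PosSemidef)
    (hρ : ρ.IsHermitian) (hQρ : Q * ρ = ρ) (hQN : (Q * N).trace = 0) :
    (ρ * N).trace = 0 := by
  have hρQ : ρ * Q = ρ := by simpa [hQ.1.eq, hρ.eq] using congrArg conjTranspose hQρ
  have hQNQ : Q * N * Q = 0 := by
    refine ((by simpa [hQ.1.eq] using hN.mul_mul_conjTranspose_same Q) :
      (Q * N * Q).PosSemidef).trace_eq_zero_iff.mp ?_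
    rwa [trace_mul_cycle, hQ.2]
  calc (ρ * N).trace = (Q * ρ * Q * N).trace := by rw [hQρ, hρQ]
    _ = (ρ * (Q * N * Q)).trace := by
        simp only [mul_assoc]
        rw [trace_mul_comm]
        simp only [mul_assoc]
    _ = 0 := by rw [hQNQ, mul_zero, trace_zero]

end IsProj

theorem IsCP.posSemidef {n : ℕ} {E : Matrix (Fin n) (Fin n) ℂ → Matrix (Fin n) (Fin n) ℂ}
    (hE : IsCP E) {A : Matrix (Fin n) (Fin n) ℂ} (hA : A.PosSemidef) : (E A).PosSemidef :=
  (hE 1 _ (hA.submatrix Prod.snd)).submatrix fun i => ((0 : Fin 1), i)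

def IsTraceAdjoint {m : Type*} [Fintype m] (E E' : Matrix m m ℂ → Matrix m m ℂ) : Prop :=
  ∀ A B, (E A * B).trace = (A * E' B).trace

namespace IsTraceAdjoint

section General

variable {m : Type*} [Fintype m] {E E' : Matrix m m ℂ → Matrix m m ℂ}

theorem dotProduct_mulVec_left (h : IsTraceAdjoint E E') (A : Matrix m m ℂ) (w : m → ℂ) :
    star w ⬝ᵥ E A *ᵥ w = (A * E' (vecMulVec w (star w))).trace := by
  rw [← trace_mul_vecMulVec_star_s11, h]

theorem dotProduct_mulVec_right (h : IsTraceAdjoint E E') (B : Matrix m m ℂ) (w : m → ℂ) :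
    star w ⬝ᵥ E' B *ᵥ w = (E (vecMulVec w (star w)) * B).trace := by
  rw [← trace_mul_vecMulVec_star_s11, trace_mul_comm, h]

end General

variable {n : ℕ} {E E' : Matrix (Fin n) (Fin n) ℂ → Matrix (Fin n) (Fin n) ℂ}

theorem posSemidef (h : IsTraceAdjoint E E') (hE : IsCP E) {B : Matrix (Fin n) (Fin n) ℂ}
    (hB : B.PosSemidef) : (E' B).PosSemidef :=
  posSemidef_of_forall_dotProduct_mulVec_nonneg_s11 fun w => h.dotProduct_mulVec_right B w ▸
    (hE.posSemidef (posSemidef_vecMulVec_self_star w)).trace_mul_nonneg_s11 hB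

theorem one_sub_posSemidef (h : IsTraceAdjoint E E') (hE : IsCP E) (hT : IsTNI E)
    {Q : Matrix (Fin n) (Fin n) ℂ} (hQ : IsProj Q) : (1 - E' Q).PosSemidef := by
  refine posSemidef_of_forall_dotProduct_mulVec_nonneg_s11 fun w => ?_
  set ρ := vecMulVec w (star w)
  have hρ : ρ.PosSemidef := posSemidef_vecMulVec_self_star w
  have hEρ : (E ρ).PosSemidef := hE.posSemidef hρ
  have hQ_le : (E ρ * Q).trace ≤ (E ρ).trace := by
    simpa [mul_sub, trace_sub] using hEρ.trace_mul_nonneg_s11 hQ.one_sub.posSemidef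
  have hE_le : (E ρ).trace ≤ star w ⬝ᵥ w := by
    have hw : ρ.trace = star w ⬝ᵥ w := by rw [dotProduct_comm]; rfl
    refine Complex.le_def.mpr ⟨hw ▸ hT ρ hρ, ?_⟩
    rw [← hw, (Complex.nonneg_iff.mp hEρ.trace_nonneg).2.symm,
      (Complex.nonneg_iff.mp hρ.trace_nonneg).2.symm]
  rw [sub_mulVec, one_mulVec, dotProduct_sub, h.dotProduct_mulVec_right, sub_nonneg]
  exact hQ_le.trans hE_le

theorem mulVec_eq_zero_of_support (h : IsTraceAdjoint E E') (hE : IsCP E)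
    {Q ρ : Matrix (Fin n) (Fin n) ℂ} (hQ : IsProj Q) (hρ : ρ.PosSemidef) (hQρ : Q * ρ = ρ)
    {w : Fin n → ℂ} (hw : E Q *ᵥ w = 0) : E ρ *ᵥ w = 0 := by
  have hN : (E' (vecMulVec w (star w))).PosSemidef :=
    h.posSemidef hE (posSemidef_vecMulVec_self_star w)
  have hQN := h.dotProduct_mulVec_left Q w
  rw [hw, dotProduct_zero] at hQN
  rw [← (hE.posSemidef hρ).dotProduct_mulVec_zero_iff, h.dotProduct_mulVec_left]
  exact hQ.trace_mul_eq_zero_of_support hN hρ.1 hQρ hQN.symm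

end IsTraceAdjoint

theorem projector_transformers_general {n : ℕ}
    (E E' : Matrix (Fin n) (Fin n) ℂ → Matrix (Fin n) (Fin n) ℂ)
    (hE : IsCPTN E)
    (hadj : ∀ A B : Matrix (Fin n) (Fin n) ℂ, (E A * B).trace = (A * E' B).trace)
    (Q : Matrix (Fin n) (Fin n) ℂ) (hQ : IsProj Q)
    -- `R1` is the projector onto the eigenvalue-1 eigenspace of `E†(Q)`
    (R1 : Matrix (Fin n) (Fin n) ℂ) (hR1 : IsProj R1)
    (hR1c : ∀ v : Fin n → ℂ, R1.mulVec v = v ↔ (E' Q).mulVec v = v)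
    -- `R2` is the projector onto the kernel of `E†(Q⊥)`
    (R2 : Matrix (Fin n) (Fin n) ℂ) (hR2 : IsProj R2)
    (hR2c : ∀ v : Fin n → ℂ, R2.mulVec v = v ↔ (E' (1 - Q)).mulVec v = 0)
    -- `R3` is the projector onto the support of `E(Q)`
    (R3 : Matrix (Fin n) (Fin n) ℂ) (hR3 : IsProj R3)
    (hR3c : ∀ v : Fin n → ℂ, R3.mulVec v = 0 ↔ (E Q).mulVec v = 0) :
    -- `R1` is the largest projector below `E†(Q)`
    (Loewner R1 (E' Q) ∧
      ∀ P : Matrix (Fin n) (Fin n) ℂ, IsProj P → Loewner P (E' Q) → Loewner P R1) ∧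
    -- `R2` is the largest projector below `I - E†(I - Q)`
    (Loewner R2 (1 - E' (1 - Q)) ∧
      ∀ P : Matrix (Fin n) (Fin n) ℂ, IsProj P → Loewner P (1 - E' (1 - Q)) → Loewner P R2) ∧
    -- `R3` is the smallest projector containing `supp(E(ρ))` for all densities `ρ` with support in `Q`
    ((∀ ρ : Matrix (Fin n) (Fin n) ℂ, IsDensity ρ → Q * ρ = ρ → R3 * E ρ = E ρ) ∧
      ∀ S : Matrix (Fin n) (Fin n) ℂ, IsProj S →
        (∀ ρ : Matrix (Fin n) (Fin n) ℂ, IsDensity ρ → Q * ρ = ρ → S * E ρ = E ρ) →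
        Loewner R3 S) := by
  obtain ⟨hElin, hCP, hTNI⟩ := hE
  have hadj : IsTraceAdjoint E E' := hadj
  have hEQ : (E Q).PosSemidef := hCP.posSemidef hQ.posSemidef
  refine ⟨hR1.greatest_below_effect (hadj.posSemidef hCP hQ.posSemidef)
      (hadj.one_sub_posSemidef hCP hTNI hQ) hR1c,
    hR2.greatest_below_effect (hadj.one_sub_posSemidef hCP hTNI hQ.one_sub)
      (by simpa using hadj.posSemidef hCP hQ.one_sub.posSemidef)
      (fun v => by rw [hR2c, sub_mulVec, one_mulVec, sub_eq_self]),
    fun ρ hρ hQρ => ?_, fun S hS hSupp => ?_⟩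
  · exact (hR3.mul_eq_right_iff_ker_le (hCP.posSemidef hρ.1).1).mpr fun v hv =>
      hadj.mulVec_eq_zero_of_support hCP hQ hρ.1 hQρ ((hR3c v).mp hv)
  · obtain ⟨c, hc, hcQ⟩ := hQ.posSemidef.exists_isDensity_smul
    have hSEQ : S * E Q = E Q := by
      have h := hSupp _ hcQ (by rw [mul_smul_comm, hQ.2])
      rwa [hElin.map_smul, mul_smul_comm, (smul_right_injective _ hc).eq_iff] at h
    have hSR3 : S * R3 = R3 := (hS.mul_eq_right_iff_ker_le hR3.1).mpr fun v hv =>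
      (hR3c v).mpr ((hS.mul_eq_right_iff_ker_le hEQ.1).mp hSEQ v hv)
    exact hR3.loewner_of_mul_eq hS.posSemidef hSR3

theorem projector_transformers {n : ℕ}
    (E E' : Matrix (Fin n) (Fin n) ℂ → Matrix (Fin n) (Fin n) ℂ)
    (hE : IsCPTN E) (hE'l : IsLinearMap ℂ E')
    (hadj : ∀ A B : Matrix (Fin n) (Fin n) ℂ, (E A * B).trace = (A * E' B).trace)
    (Q : Matrix (Fin n) (Fin n) ℂ) (hQ : IsProj Q)
    -- `R1` is the projector onto the eigenvalue-1 eigenspace of `E†(Q)`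
    (R1 : Matrix (Fin n) (Fin n) ℂ) (hR1 : IsProj R1)
    (hR1c : ∀ v : Fin n → ℂ, R1.mulVec v = v ↔ (E' Q).mulVec v = v)
    -- `R2` is the projector onto the kernel of `E†(Q⊥)`
    (R2 : Matrix (Fin n) (Fin n) ℂ) (hR2 : IsProj R2)
    (hR2c : ∀ v : Fin n → ℂ, R2.mulVec v = v ↔ (E' (1 - Q)).mulVec v = 0)
    -- `R3` is the projector onto the support of `E(Q)`
    (R3 : Matrix (Fin n) (Fin n) ℂ) (hR3 : IsProj R3)
    (hR3c : ∀ v : Fin n → ℂ, R3.mulVec v = 0 ↔ (E Q).mulVec v = 0) :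
    -- `R1` is the largest projector below `E†(Q)`
    (Loewner R1 (E' Q) ∧
      ∀ P : Matrix (Fin n) (Fin n) ℂ, IsProj P → Loewner P (E' Q) → Loewner P R1) ∧
    -- `R2` is the largest projector below `I - E†(I - Q)`
    (Loewner R2 (1 - E' (1 - Q)) ∧
      ∀ P : Matrix (Fin n) (Fin n) ℂ, IsProj P → Loewner P (1 - E' (1 - Q)) → Loewner P R2) ∧
    -- `R3` is the smallest projector containing `supp(E(ρ))` for all densities `ρ` with support in `Q`
    ((∀ ρ : Matrix (Fin n) (Fin n) ℂ, IsDensity ρ → Q * ρ = ρ → R3 * E ρ = E ρ) ∧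
      ∀ S : Matrix (Fin n) (Fin n) ℂ, IsProj S →
        (∀ ρ : Matrix (Fin n) (Fin n) ℂ, IsDensity ρ → Q * ρ = ρ → S * E ρ = E ρ) →
        Loewner R3 S) :=
  projector_transformers_general E E' hE hadj Q hQ R1 hR1 hR1c R2 hR2 hR2c R3 hR3 hR3c
end
end

section
/- If {E_i : i ∈ K} and {F_j : j ∈ J} are two Kraus representations of the same completely positive super-operator on L(H) (H finite-dimensional), i.e., Σ_i E_i A E_i† = Σ_j F_j A F_j† for all A, then span{E_i : i ∈ K} = span{F_j : j ∈ J}. -/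
open Matrix
open scoped ComplexOrder

noncomputable section

/-!
Flatten each Kraus operator `E i` into a column vector and let `V` be the matrix with these
columns. Evaluating the hypothesis at the matrix units `A = single a b 1` shows that the Gram
matrix `V * Vᴴ` (the unnormalised Choi matrix of the channel) depends only on the channel.
Over a star-ordered field `V * Vᴴ` has the same rank as `V`, so both have the same column space,
which is the span of the flattened Kraus operators.
-/

namespace Matrix

section Gram

variable {m ι κ R : Type*} [Fintype m] [Fintype ι] [Fintype κ]
  [Field R] [PartialOrder R] [StarRing R] [StarOrderedRing R]

theorem range_mulVecLin_self_mul_conjTranspose (A : Matrix m ι R) :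
    LinearMap.range (A * Aᴴ).mulVecLin = LinearMap.range A.mulVecLin := by
  refine Submodule.eq_of_le_of_finrank_eq ?_ (rank_self_mul_conjTranspose A)
  rw [mulVecLin_mul]
  exact LinearMap.range_comp_le_range _ _

theorem span_range_col_eq_of_self_mul_conjTranspose_eq {A : Matrix m ι R} {B : Matrix m κ R}
    (h : A * Aᴴ = B * Bᴴ) :
    Submodule.span R (Set.range A.col) = Submodule.span R (Set.range B.col) := by
  rw [← range_mulVecLin, ← range_mulVecLin, ← range_mulVecLin_self_mul_conjTranspose, h,
    range_mulVecLin_self_mul_conjTranspose]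

end Gram

section Flatten

variable {m n ι : Type*}

def flattenLinearEquiv (R : Type*) [Semiring R] : Matrix m n R ≃ₗ[R] (m × n → R) :=
  (ofLinearEquiv R).symm ≪≫ₗ (LinearEquiv.curry R R m n).symm

def vecCols {R : Type*} [Semiring R] (Es : ι → Matrix m n R) : Matrix (m × n) ι R :=
  (of fun i => flattenLinearEquiv R (Es i))ᵀ

theorem span_range_col_vecCols {R : Type*} [Semiring R] (Es : ι → Matrix m n R) :
    Submodule.span R (Set.range (vecCols Es).col) =
      (Submodule.span R (Set.range Es)).map (flattenLinearEquiv R).toLinearMap := by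
  rw [← Submodule.span_image, ← Set.range_comp]
  rfl

theorem vecCols_mul_conjTranspose_apply [Fintype n] [Fintype ι] [DecidableEq n]
    {R : Type*} [CommSemiring R] [StarRing R] (Es : ι → Matrix m n R) (p q : m) (a b : n) :
    (vecCols Es * (vecCols Es)ᴴ) (p, a) (q, b) =
      (∑ i, Es i * single a b (1 : R) * (Es i)ᴴ) p q := by
  simp [vecCols, flattenLinearEquiv, mul_apply, sum_apply, single, ite_and]

end Flatten

theorem span_range_eq_of_sum_mul_mul_conjTranspose_eq {m n ι κ R : Type*} [Fintype m]
    [Fintype n] [DecidableEq n] [Fintype ι] [Fintype κ]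
    [Field R] [PartialOrder R] [StarRing R] [StarOrderedRing R]
    {Es : ι → Matrix m n R} {Fs : κ → Matrix m n R}
    (h : ∀ A : Matrix n n R, ∑ i, Es i * A * (Es i)ᴴ = ∑ j, Fs j * A * (Fs j)ᴴ) :
    Submodule.span R (Set.range Es) = Submodule.span R (Set.range Fs) := by
  have hGram : vecCols Es * (vecCols Es)ᴴ = vecCols Fs * (vecCols Fs)ᴴ := by
    ext ⟨p, a⟩ ⟨q, b⟩
    rw [vecCols_mul_conjTranspose_apply, vecCols_mul_conjTranspose_apply, h]
  apply Submodule.map_injective_of_injective (flattenLinearEquiv R).injective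
  rw [← span_range_col_vecCols, ← span_range_col_vecCols]
  exact span_range_col_eq_of_self_mul_conjTranspose_eq hGram

end Matrix

theorem kraus_span_well_defined {n : ℕ} {ι κ : Type*} [Fintype ι] [Fintype κ]
    (Es : ι → Matrix (Fin n) (Fin n) ℂ) (Fs : κ → Matrix (Fin n) (Fin n) ℂ)
    (h : ∀ A : Matrix (Fin n) (Fin n) ℂ,
      ∑ i, Es i * A * (Es i)ᴴ = ∑ j, Fs j * A * (Fs j)ᴴ) :
    Submodule.span ℂ (Set.range Es) = Submodule.span ℂ (Set.range Fs) :=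
  span_range_eq_of_sum_mul_mul_conjTranspose_eq h
end
end

section
/- Let E be a CPTN super-operator on L(H) and define sp(P) = supp(E(P)) for projectors P. Then sp preserves finite joins: sp(P ∨ Q) = sp(P) ∨ sp(Q) for all projectors P, Q, where ∨ is the closed linear span of subspaces. -/
/-!
Fix `v`. The functional `M ↦ ⟨v|E(M)|v⟩` is linear and nonnegative on positive matrices, so it
is `M ↦ tr(M σ)` for a positive `σ` (namely `E†(|v⟩⟨v|)`). For positive `M`, `E(M) v = 0` iff
`⟨v|E(M)|v⟩ = 0` iff `tr(M σ) = 0` iff `M σ = 0`, i.e. iff `range σ ⊆ ker M`. Since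
`ker J = ker P ∩ ker Q`, the condition for `J` is the conjunction of those for `P` and `Q`.
-/

open Matrix
open scoped ComplexOrder

noncomputable section

section

variable {𝕜 m : Type*} [RCLike 𝕜] [Fintype m]

open scoped MatrixOrder in
lemma Matrix.PosSemidef.trace_mul_eq_zero_iff {A B : Matrix m m 𝕜}
    (hA : A.PosSemidef) (hB : B.PosSemidef) : (A * B).trace = 0 ↔ A * B = 0 := by
  classical
  refine ⟨fun h => ?_, fun h => h ▸ trace_zero m 𝕜⟩
  obtain ⟨X, rfl⟩ := CStarAlgebra.nonneg_iff_eq_star_mul_self.mp hA.nonneg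
  obtain ⟨Y, rfl⟩ := CStarAlgebra.nonneg_iff_eq_star_mul_self.mp hB.nonneg
  simp only [star_eq_conjTranspose] at h ⊢
  have hXY : X * Yᴴ = 0 := by
    rw [← trace_conjTranspose_mul_self_eq_zero_iff, ← h, conjTranspose_mul,
      conjTranspose_conjTranspose, Matrix.mul_assoc, ← Matrix.mul_assoc Xᴴ, trace_mul_comm]
    simp only [Matrix.mul_assoc]
  calc Xᴴ * X * (Yᴴ * Y) = Xᴴ * (X * Yᴴ) * Y := by simp only [Matrix.mul_assoc]
    _ = 0 := by rw [hXY, Matrix.mul_zero, Matrix.zero_mul]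

open scoped InnerProductSpace in
lemma Matrix.posSemidef_of_forall_dotProduct_mulVec_nonneg_s17 {A : Matrix m m ℂ}
    (h : ∀ x, 0 ≤ star x ⬝ᵥ A *ᵥ x) : A.PosSemidef := by
  classical
  refine .of_dotProduct_mulVec_nonneg ?_ h
  rw [← isSymmetric_toEuclideanLin_iff, LinearMap.isSymmetric_iff_inner_map_self_real]
  intro v
  have hv : ⟪v, A.toEuclideanLin v⟫_ℂ = star (v : m → ℂ) ⬝ᵥ A *ᵥ v := by
    simp [EuclideanSpace.inner_eq_star_dotProduct, dotProduct_comm]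
  rw [← inner_conj_symm, hv, starRingEnd_apply, starRingEnd_apply,
    (IsSelfAdjoint.of_nonneg (h v)).star_eq, (IsSelfAdjoint.of_nonneg (h v)).star_eq]

lemma LinearMap.eq_trace_mul [DecidableEq m] {R : Type*} [CommSemiring R]
    (f : Matrix m m R →ₗ[R] R) (M : Matrix m m R) :
    f M = (M * of fun i j : m => f (Matrix.single j i 1)).trace := by
  have hs : ∀ i j, Matrix.single i j (M i j) = M i j • Matrix.single i j 1 := by
    simp [smul_single]
  conv_lhs => rw [matrix_eq_sum_single M]
  simp only [map_sum, hs, map_smul, smul_eq_mul]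
  rfl

lemma LinearMap.exists_posSemidef_eq_trace_mul (f : Matrix m m ℂ →ₗ[ℂ] ℂ)
    (hf : ∀ M : Matrix m m ℂ, M.PosSemidef → 0 ≤ f M) :
    ∃ σ : Matrix m m ℂ, σ.PosSemidef ∧ ∀ M, f M = (M * σ).trace := by
  classical
  refine ⟨_, posSemidef_of_forall_dotProduct_mulVec_nonneg_s17 fun x => ?_, f.eq_trace_mul⟩
  have hx := hf _ (posSemidef_vecMulVec_self_star x)
  rwa [f.eq_trace_mul, vecMulVec_mul, trace_vecMulVec, dotProduct_comm, ← dotProduct_mulVec]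
    at hx

/-- `σ` is `Φ†(|v⟩⟨v|)`; this is the paper's `⟨v|Φ(M)|v⟩ = 0 ↔ M ⊆ ker Φ†(|v⟩⟨v|)`. -/
lemma exists_posSemidef_mulVec_eq_zero_iff {k : Type*} [Fintype k]
    (Φ : Matrix m m ℂ →ₗ[ℂ] Matrix k k ℂ) (hΦ : ∀ M, M.PosSemidef → (Φ M).PosSemidef)
    (v : k → ℂ) :
    ∃ σ : Matrix m m ℂ, σ.PosSemidef ∧ ∀ M, M.PosSemidef → (Φ M *ᵥ v = 0 ↔ M * σ = 0) := by
  let f : Matrix m m ℂ →ₗ[ℂ] ℂ :=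
    { toFun := fun M => star v ⬝ᵥ Φ M *ᵥ v
      map_add' := fun A B => by simp only [map_add, add_mulVec, dotProduct_add]
      map_smul' := fun c A => by simp only [map_smul, smul_mulVec, dotProduct_smul]; rfl }
  obtain ⟨σ, hσ, hfσ⟩ := f.exists_posSemidef_eq_trace_mul
    fun M hM => (hΦ M hM).dotProduct_mulVec_nonneg v
  refine ⟨σ, hσ, fun M hM => ?_⟩
  rw [← (hΦ M hM).dotProduct_mulVec_zero_iff, ← hM.trace_mul_eq_zero_iff hσ]
  exact Eq.congr_left (hfσ M)

end

lemma IsCP.posSemidef_apply {n : ℕ} {Φ : Matrix (Fin n) (Fin n) ℂ → Matrix (Fin n) (Fin n) ℂ}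
    (hΦ : IsCP Φ) {A : Matrix (Fin n) (Fin n) ℂ} (hA : A.PosSemidef) : (Φ A).PosSemidef :=
  (hΦ 1 _ (hA.submatrix Prod.snd)).submatrix fun i => ((0 : Fin 1), i)

lemma IsProj.posSemidef_s17 {n : ℕ} {P : Matrix (Fin n) (Fin n) ℂ} (hP : IsProj P) :
    P.PosSemidef := by
  simpa only [hP.1.eq, hP.2] using posSemidef_conjTranspose_mul_self P

theorem sp_preserves_joins {n : ℕ}
    (E : Matrix (Fin n) (Fin n) ℂ → Matrix (Fin n) (Fin n) ℂ)
    (hE : IsCPTN E)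
    (P Q J : Matrix (Fin n) (Fin n) ℂ)
    (hP : IsProj P) (hQ : IsProj Q) (hJ : IsProj J)
    -- `J` is the projector onto `P ∨ Q`: its kernel is `ker P ∩ ker Q`
    (hJc : ∀ v : Fin n → ℂ, J.mulVec v = 0 ↔ (P.mulVec v = 0 ∧ Q.mulVec v = 0)) :
    -- `supp(E(J)) = supp(E(P)) ∨ supp(E(Q))`, expressed via kernels
    ∀ v : Fin n → ℂ,
      (E J).mulVec v = 0 ↔ ((E P).mulVec v = 0 ∧ (E Q).mulVec v = 0) := by
  obtain ⟨hlin, hcp, -⟩ := hE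
  intro v
  obtain ⟨σ, -, hσ⟩ := exists_posSemidef_mulVec_eq_zero_iff (hlin.mk' E)
    (fun _ hM => hcp.posSemidef_apply hM) v
  simp only [IsLinearMap.mk'_apply] at hσ
  rw [hσ J hJ.posSemidef_s17, hσ P hP.posSemidef_s17, hσ Q hQ.posSemidef_s17]
  simp only [ext_iff_mulVec, ← mulVec_mulVec, zero_mulVec, hJc, forall_and]
end
end
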